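/- arXiv:2107.08310 — 3 statements merged into one kernel-verified Lean document; each statement's English description precedes it below -/
import Mathlib

section
/- If FPR(s) = FNR(s) for every demographic group s ∈ S, and the error rates are equal across all groups, i.e. ErrorRate(s_i) = ErrorRate(s_j) for all s_i, s_j ∈ S, then equalized odds holds: TPR(s_i) = TPR(s_j) and FPR(s_i) = FPR(s_j) for all s_i, s_j ∈ S. (Corollary 1) -/
/-- Corollary 1: If FPR(s) = FNR(s) for every demographic group s ∈ S, and the
error rates are equal across all groups, then equalized odds holds:
TPR(sᵢ) = TPR(sⱼ) and FPR(sᵢ) = FPR(sⱼ) for all sᵢ, sⱼ ∈ S. -/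
theorem equalized_odds_of_FPR_eq_FNR_and_equal_error
    {S : Type*} [Fintype S] [Nonempty S]
    (TP FP FN TN : S → ℝ)
    (hTP : ∀ s, 0 ≤ TP s) (hFP : ∀ s, 0 ≤ FP s)
    (hFN : ∀ s, 0 ≤ FN s) (hTN : ∀ s, 0 ≤ TN s)
    (hpos : ∀ s, TP s + FN s > 0) (hneg : ∀ s, FP s + TN s > 0)
    (TPR FPR FNR ErrorRate : S → ℝ)
    (hTPR : ∀ s, TPR s = TP s / (TP s + FN s))
    (hFPR : ∀ s, FPR s = FP s / (FP s + TN s))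
    (hFNR : ∀ s, FNR s = FN s / (FN s + TP s))
    (hER : ∀ s, ErrorRate s = (FP s + FN s) / (TP s + FP s + FN s + TN s))
    (hcond : ∀ s, FPR s = FNR s)
    (herr : ∀ si sj : S, ErrorRate si = ErrorRate sj) :
    ∀ si sj : S, TPR si = TPR sj ∧ FPR si = FPR sj := by
  -- First: FPR s = ErrorRate s for every s
  have key : ∀ s, FPR s = ErrorRate s := by
    intro s
    have hne1 : FP s + TN s ≠ 0 := ne_of_gt (hneg s)
    have hne2 : FN s + TP s ≠ 0 := ne_of_gt (by linarith [hpos s])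
    have h1 : FP s = FPR s * (FP s + TN s) := by
      rw [hFPR, div_mul_cancel₀ _ hne1]
    have h2 : FN s = FPR s * (FN s + TP s) := by
      rw [hcond, hFNR, div_mul_cancel₀ _ hne2]
    have htot : TP s + FP s + FN s + TN s > 0 := by
      have := hpos s; have := hneg s; linarith
    rw [hER]
    rw [eq_div_iff (ne_of_gt htot)]
    nlinarith [h1, h2]
  have hTPR' : ∀ s, TPR s = 1 - FPR s := by
    intro s
    have hne2 : FN s + TP s ≠ 0 := ne_of_gt (by linarith [hpos s])
    have hne3 : TP s + FN s ≠ 0 := ne_of_gt (hpos s)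
    rw [hTPR, hcond s, hFNR, eq_sub_iff_add_eq, div_add_div _ _ hne3 hne2, div_eq_one_iff_eq (mul_ne_zero hne3 hne2)]
    ring
  intro si sj
  have hf : FPR si = FPR sj := by rw [key, key]; exact herr si sj
  exact ⟨by rw [hTPR', hTPR', hf], hf⟩
end

section
/- If FPR(s) = FNR(s) for every demographic group s ∈ S, and the error rates are equal across all groups, i.e. ErrorRate(s_i) = ErrorRate(s_j) for all s_i, s_j ∈ S, then both fairness metrics vanish: mAOD = 0 and mEOD = 0. -/
/-! If FPR = FNR = r in a group, then FP = r·(FP + TN) and FN = r·(FN + TP), so the error rate,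
being the mediant (FP + FN)/(total), is r as well. Hence FPR = ErrorRate and
TPR = 1 - FNR = 1 - ErrorRate in every group: TPR + FPR = 1 everywhere, and TPR is constant once
the error rates agree. -/

theorem add_div_add_eq_div_of_div_eq_div {K : Type*} [Field K] {a b c d : K}
    (hb : b ≠ 0) (hd : d ≠ 0) (hbd : b + d ≠ 0) (h : a / b = c / d) :
    (a + c) / (b + d) = c / d := by
  rw [div_eq_iff hbd]
  calc a + c = c / d * b + c / d * d := by rw [← (div_eq_iff hb).mp h, div_mul_cancel₀ c hd]
    _ = c / d * (b + d) := by ring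

theorem Finset.sup'_sub_inf'_eq_zero_of_forall_eq {ι α : Type*} [Lattice α] [AddGroup α]
    {s : Finset ι} (H : s.Nonempty) {f : ι → α} {a : α} (h : ∀ i ∈ s, f i = a) :
    s.sup' H f - s.inf' H f = 0 := by
  rw [sup'_eq_of_forall H f h, inf'_eq_of_forall H f h, sub_self]

theorem errorRate_eq_FNR_of_FPR_eq_FNR {TP FP FN TN : ℝ}
    (hpos : TP + FN > 0) (hneg : FP + TN > 0)
    (h : FP / (FP + TN) = FN / (FN + TP)) :
    (FP + FN) / (TP + FP + FN + TN) = FN / (FN + TP) := by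
  rw [show TP + FP + FN + TN = (FP + TN) + (FN + TP) by ring]
  have hpos' : 0 < FN + TP := by linarith
  exact add_div_add_eq_div_of_div_eq_div hneg.ne' hpos'.ne' (add_pos hneg hpos').ne' h

theorem TPR_add_FNR_eq_one {TP FN : ℝ} (hpos : TP + FN > 0) :
    TP / (TP + FN) + FN / (FN + TP) = 1 := by
  rw [add_comm FN TP, ← add_div, div_self hpos.ne']

theorem mAOD_and_mEOD_eq_zero_of_FPR_eq_FNR_and_equal_error_general
    {S : Type*} [Fintype S] [Nonempty S]
    (TP FP FN TN : S → ℝ)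
    (hpos : ∀ s, TP s + FN s > 0) (hneg : ∀ s, FP s + TN s > 0)
    (TPR FPR FNR ErrorRate : S → ℝ)
    (hTPR : ∀ s, TPR s = TP s / (TP s + FN s))
    (hFPR : ∀ s, FPR s = FP s / (FP s + TN s))
    (hFNR : ∀ s, FNR s = FN s / (FN s + TP s))
    (hER : ∀ s, ErrorRate s = (FP s + FN s) / (TP s + FP s + FN s + TN s))
    (mAOD mEOD : ℝ)
    (hmAOD : mAOD = (1/2) *
      (Finset.univ.sup' Finset.univ_nonempty (fun s => TPR s + FPR s)
        - Finset.univ.inf' Finset.univ_nonempty (fun s => TPR s + FPR s)))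
    (hmEOD : mEOD = Finset.univ.sup' Finset.univ_nonempty TPR
        - Finset.univ.inf' Finset.univ_nonempty TPR)
    (hcond : ∀ s, FPR s = FNR s)
    (herr : ∀ si sj : S, ErrorRate si = ErrorRate sj) :
    mAOD = 0 ∧ mEOD = 0 := by
  obtain ⟨s₀⟩ := ‹Nonempty S›
  have hFNR_eq_ER : ∀ s, FNR s = ErrorRate s := fun s => by
    have h := hcond s
    rw [hFPR, hFNR] at h
    rw [hFNR, hER, errorRate_eq_FNR_of_FPR_eq_FNR (hpos s) (hneg s) h]
  have hTPR_eq : ∀ s, TPR s = 1 - ErrorRate s := fun s => by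
    rw [← hFNR_eq_ER, hTPR, hFNR, ← TPR_add_FNR_eq_one (hpos s), add_sub_cancel_right]
  have hsum : ∀ s ∈ Finset.univ, TPR s + FPR s = 1 := fun s _ => by
    rw [hTPR_eq, hcond, hFNR_eq_ER, sub_add_cancel]
  have hTPR_const : ∀ s ∈ Finset.univ, TPR s = 1 - ErrorRate s₀ := fun s _ => by
    rw [hTPR_eq, herr s s₀]
  refine ⟨?_, ?_⟩
  · rw [hmAOD, Finset.sup'_sub_inf'_eq_zero_of_forall_eq _ hsum, mul_zero]
  · rw [hmEOD, Finset.sup'_sub_inf'_eq_zero_of_forall_eq _ hTPR_const]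

/-- If FPR(s) = FNR(s) for every demographic group s ∈ S, and the error rates
are equal across all groups, then both fairness metrics vanish:
mAOD = 0 and mEOD = 0. -/
theorem mAOD_and_mEOD_eq_zero_of_FPR_eq_FNR_and_equal_error
    {S : Type*} [Fintype S] [Nonempty S]
    (TP FP FN TN : S → ℝ)
    (hTP : ∀ s, 0 ≤ TP s) (hFP : ∀ s, 0 ≤ FP s)
    (hFN : ∀ s, 0 ≤ FN s) (hTN : ∀ s, 0 ≤ TN s)
    (hpos : ∀ s, TP s + FN s > 0) (hneg : ∀ s, FP s + TN s > 0)
    (TPR FPR FNR ErrorRate : S → ℝ)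
    (hTPR : ∀ s, TPR s = TP s / (TP s + FN s))
    (hFPR : ∀ s, FPR s = FP s / (FP s + TN s))
    (hFNR : ∀ s, FNR s = FN s / (FN s + TP s))
    (hER : ∀ s, ErrorRate s = (FP s + FN s) / (TP s + FP s + FN s + TN s))
    (mAOD mEOD : ℝ)
    (hmAOD : mAOD = (1/2) *
      (Finset.univ.sup' Finset.univ_nonempty (fun s => TPR s + FPR s)
        - Finset.univ.inf' Finset.univ_nonempty (fun s => TPR s + FPR s)))
    (hmEOD : mEOD = Finset.univ.sup' Finset.univ_nonempty TPR
        - Finset.univ.inf' Finset.univ_nonempty TPR)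
    (hcond : ∀ s, FPR s = FNR s)
    (herr : ∀ si sj : S, ErrorRate si = ErrorRate sj) :
    mAOD = 0 ∧ mEOD = 0 :=
  mAOD_and_mEOD_eq_zero_of_FPR_eq_FNR_and_equal_error_general TP FP FN TN hpos hneg TPR FPR FNR
    ErrorRate hTPR hFPR hFNR hER mAOD mEOD hmAOD hmEOD hcond herr
end

section
/- If the sample weights satisfy the class-balance condition w(s,0)/w(s,1) = (FN(s)+TP(s))/(TN(s)+FP(s)) for every s ∈ S, and α(s) := w(s,0)·(TN(s)+FP(s)) takes a common value α for all s ∈ S, then the weighted training loss equals L = α · Σ_{s∈S} (FPR(s)+FNR(s)). -/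
/-- If the sample weights satisfy the class-balance condition
w(s,0)/w(s,1) = (FN(s)+TP(s))/(TN(s)+FP(s)) for every s ∈ S, and
α(s) := w(s,0)·(TN(s)+FP(s)) takes a common value α for all s ∈ S, then the
weighted training loss equals L = α · Σ_{s∈S} (FPR(s)+FNR(s)). -/
theorem loss_eq_alpha_mul_sum_of_const_alpha
    {S : Type*} [Fintype S] [Nonempty S]
    (TP FP FN TN : S → ℝ)
    (hTP : ∀ s, 0 ≤ TP s) (hFP : ∀ s, 0 ≤ FP s)
    (hFN : ∀ s, 0 ≤ FN s) (hTN : ∀ s, 0 ≤ TN s)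
    (hpos : ∀ s, TP s + FN s > 0) (hneg : ∀ s, FP s + TN s > 0)
    (FPR FNR : S → ℝ)
    (hFPR : ∀ s, FPR s = FP s / (FP s + TN s))
    (hFNR : ∀ s, FNR s = FN s / (FN s + TP s))
    (w0 w1 : S → ℝ)
    (hw0 : ∀ s, 0 < w0 s) (hw1 : ∀ s, 0 < w1 s)
    (L : ℝ)
    (hL : L = ∑ s : S, (w0 s * FP s + w1 s * FN s))
    (hbal : ∀ s, w0 s / w1 s = (FN s + TP s) / (TN s + FP s))
    (α : ℝ)
    (hα : ∀ s, w0 s * (TN s + FP s) = α) :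
    L = α * ∑ s : S, (FPR s + FNR s) := by
  subst hL
  rw [Finset.mul_sum]
  apply Finset.sum_congr rfl
  intro s _
  have hne1 : FP s + TN s ≠ 0 := by have := hneg s; linarith
  have hne2 : FN s + TP s ≠ 0 := by have := hpos s; linarith
  have hw1' : w1 s ≠ 0 := ne_of_gt (hw1 s)
  have hne1' : TN s + FP s ≠ 0 := by have := hneg s; linarith
  have hcross : w0 s * (TN s + FP s) = w1 s * (FN s + TP s) := by
    have h := hbal s
    field_simp at h
    linarith
  have hα1 : w1 s * (FN s + TP s) = α := by rw [← hcross]; exact hα s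
  rw [hFPR s, hFNR s]
  field_simp
  linear_combination FP s * (FN s + TP s) * (hα s) + FN s * (FP s + TN s) * hα1
end
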